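/- arXiv:1206.3354 — 2 statements merged into one kernel-verified Lean document; each statement's English description precedes it below -/
import Mathlib

section
/- Let $p$ be a prime, $q = p^f$, $k$ a positive integer, and let $h, e$ be positive integers with $e \mid h$, $h \mid q - 1$, and $e > 1$. Let $\alpha$ be a primitive element of $\mathbb{F}_{q^k}$, and set $g = \alpha^{(q-1)/h}$ and $\beta = \alpha^{(q^k-1)/e}$. Then for every nonnegative integer $j$, $g^{-q^j} \ne (\beta g)^{-1}$; equivalently, $g^{q^j - 1} \ne \beta$ for all $j$. -/
set_option maxHeartbeats 1000000


lemma g_pow_ne_beta_aux (q a : ℕ) (hq : 2 ≤ q) (ha : 1 ≤ a) :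
    (q - 1) * (a - 1) < q * a - 1 := by
  rcases Nat.exists_eq_add_of_le hq with ⟨q', rfl⟩
  rcases Nat.exists_eq_add_of_le ha with ⟨a', rfl⟩
  have hE : (2 + q') * (1 + a') = 2 + 2 * a' + q' + q' * a' := by ring
  have hL : (2 + q' - 1) * (1 + a' - 1) = a' + q' * a' := by
    have h1 : 2 + q' - 1 = 1 + q' := by omega
    have h2 : 1 + a' - 1 = a' := by omega
    rw [h1, h2]; ring
  omega

/-- Let `q = p^f`, let `e ∣ h ∣ q - 1` with `e > 1`, let `α` be a primitive element of
`F_{q^k}`, `g = α^{(q-1)/h}` and `β = α^{(q^k-1)/e}`.  Then for every `j ≥ 0`,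
`g^{-q^j} ≠ (βg)^{-1}`; equivalently, `g^{q^j - 1} ≠ β`. -/
theorem g_pow_ne_beta
    (p f : ℕ) [Fact p.Prime] (hf : 0 < f) (q : ℕ) (hq : q = p ^ f)
    (k h e : ℕ) (hk : 0 < k) (heh : e ∣ h) (hhq : h ∣ q - 1) (he : 1 < e)
    (F : Type*) [Field F] [Fintype F] (hF : Fintype.card F = q ^ k)
    (α : F) (hα : orderOf α = q ^ k - 1)
    (g β : F) (hg : g = α ^ ((q - 1) / h)) (hβ : β = α ^ ((q ^ k - 1) / e)) :
    (∀ j : ℕ, (g⁻¹) ^ (q ^ j) ≠ (β * g)⁻¹) ∧ (∀ j : ℕ, g ^ (q ^ j - 1) ≠ β) := by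
  have hp : 2 ≤ p := (Fact.out : p.Prime).two_le
  have hq2 : 2 ≤ q := by
    rw [hq]
    exact le_trans hp (Nat.le_self_pow hf.ne' p)
  set t := (q - 1) / h with ht
  set N := q ^ k - 1 with hN
  have hqk : 2 ≤ q ^ k := le_trans hq2 (Nat.le_self_pow hk.ne' q)
  have hNpos : 0 < N := by omega
  have hq1pos : 0 < q - 1 := by omega
  have hhpos : 0 < h := Nat.pos_of_dvd_of_pos hhq hq1pos
  have hepos : 0 < e := by omega
  have heq1 : e ∣ q - 1 := heh.trans hhq
  have heN : e ∣ N := heq1.trans (by simpa using Nat.sub_dvd_pow_sub_pow q 1 k)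
  have hetq1 : e * t ≤ q - 1 := by
    calc e * t ≤ h * t := Nat.mul_le_mul_right t (Nat.le_of_dvd hhpos heh)
    _ = q - 1 := Nat.mul_div_cancel' hhq
  have hαne : α ≠ 0 := by
    intro h0
    have h1 := pow_orderOf_eq_one α
    rw [hα] at h1
    rw [h0, zero_pow hNpos.ne'] at h1
    exact zero_ne_one h1
  have hgne : g ≠ 0 := by rw [hg]; exact pow_ne_zero _ hαne
  -- key claim for j < k
  have key : ∀ j : ℕ, j < k → g ^ (q ^ j - 1) ≠ β := by
    intro j hj hcon
    have hqj1 : 1 ≤ q ^ j := Nat.one_le_pow _ _ (by omega)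
    rw [hg, hβ, ← pow_mul] at hcon
    have hmod : t * (q ^ j - 1) ≡ N / e [MOD N] := by
      have hu : (Units.mk0 α hαne) ^ (t * (q ^ j - 1)) = (Units.mk0 α hαne) ^ (N / e) :=
        Units.ext (by simpa using hcon)
      have := pow_eq_pow_iff_modEq.mp hu
      rwa [← orderOf_units, Units.val_mk0, hα] at this
    -- size bound
    have hbound : e * (t * (q ^ j - 1)) < N := by
      have h1 : e * (t * (q ^ j - 1)) ≤ (q - 1) * (q ^ (k - 1) - 1) := by
        rw [← mul_assoc]
        exact Nat.mul_le_mul hetq1 (by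
          have : q ^ j ≤ q ^ (k - 1) := Nat.pow_le_pow_right (by omega) (by omega)
          omega)
      have h2 : (q - 1) * (q ^ (k - 1) - 1) < N := by
        have hk1 : 1 ≤ q ^ (k - 1) := Nat.one_le_pow _ _ (by omega)
        have hqk' : q ^ k = q * q ^ (k - 1) := by
          conv_lhs => rw [show k = 1 + (k - 1) by omega]
          rw [pow_add, pow_one]
        rw [hN, hqk']
        exact g_pow_ne_beta_aux q (q ^ (k - 1)) hq2 hk1
      omega
    have hlt1 : t * (q ^ j - 1) < N :=
      lt_of_le_of_lt (Nat.le_mul_of_pos_left _ hepos) hbound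
    have hlt2 : N / e < N := Nat.div_lt_self hNpos he
    have heq : t * (q ^ j - 1) = N / e := by
      have := hmod
      unfold Nat.ModEq at this
      rwa [Nat.mod_eq_of_lt hlt1, Nat.mod_eq_of_lt hlt2] at this
    have : e * (t * (q ^ j - 1)) = N := by rw [heq, Nat.mul_div_cancel' heN]
    omega
  -- reduce general j to j % k
  have hred : ∀ j : ℕ, g ^ (q ^ j - 1) = g ^ (q ^ (j % k) - 1) := by
    intro j
    have hqj1 : 1 ≤ q ^ j := Nat.one_le_pow _ _ (by omega)
    have hqj1' : 1 ≤ q ^ (j % k) := Nat.one_le_pow _ _ (by omega)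
    have hpow : g ^ (q ^ j) = g ^ (q ^ (j % k)) := by
      have e2 : q ^ (j % k) * (q ^ k) ^ (j / k) = q ^ j := by
        rw [← pow_mul, ← pow_add]
        congr 1
        exact Nat.mod_add_div j k
      calc g ^ (q ^ j) = g ^ (q ^ (j % k) * (q ^ k) ^ (j / k)) := by rw [e2]
        _ = (g ^ q ^ (j % k)) ^ (q ^ k) ^ (j / k) := pow_mul g _ _
        _ = (g ^ q ^ (j % k)) ^ (Fintype.card F) ^ (j / k) := by rw [hF]
        _ = g ^ q ^ (j % k) := FiniteField.pow_card_pow _ _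
    have h1 : g ^ (q ^ j - 1) * g = g ^ (q ^ (j % k) - 1) * g := by
      rw [← pow_succ, ← pow_succ, Nat.sub_add_cancel hqj1, Nat.sub_add_cancel hqj1']
      exact hpow
    exact mul_right_cancel₀ hgne h1
  have part2 : ∀ j : ℕ, g ^ (q ^ j - 1) ≠ β := by
    intro j
    rw [hred j]
    exact key _ (Nat.mod_lt j hk)
  refine ⟨fun j hcon => ?_, part2⟩
  apply part2 j
  have hqj1 : 1 ≤ q ^ j := Nat.one_le_pow _ _ (by omega)
  have : g ^ (q ^ j) = β * g := by
    have := congrArg (·⁻¹) hcon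
    simpa [inv_pow] using this
  have h1 : g ^ (q ^ j - 1) * g = β * g := by
    rw [← pow_succ, Nat.sub_add_cancel hqj1]; exact this
  exact mul_right_cancel₀ hgne h1
end

section
/- Let $N$ be a positive integer and $p$ a prime coprime to $N$ such that the subgroup $\langle p \rangle$ generated by $p$ in $(\mathbb{Z}/N\mathbb{Z})^{\ast}$ has index $2$ and $-1 \notin \langle p \rangle$. Then $N$ has at most two odd prime divisors. -/
lemma exists_special_unit' (N : ℕ) (hN : 0 < N) (q : ℕ) (hq : q.Prime) (hdvd : q ∣ N) :
    ∃ u : (ZMod N)ˣ, u ^ 2 = 1 ∧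
      (ZMod.castHom hdvd (ZMod q)) (u : ZMod N) = -1 ∧
      ∀ r : ℕ, r.Prime → r ≠ q → ∀ (hr : r ∣ N), (ZMod.castHom hr (ZMod r)) (u : ZMod N) = 1 := by
  classical
  set m : ℕ := q ^ N.factorization q with hm
  set n : ℕ := N / m with hn
  have hmn : m * n = N := Nat.ordProj_mul_ordCompl_eq_self N q
  have hcop : Nat.Coprime m n :=
    Nat.Coprime.pow_left _ (Nat.coprime_ordCompl hq hN.ne')
  -- Bezout over ℤ
  have hicop : IsCoprime (m : ℤ) (n : ℤ) := by
    rw [Int.isCoprime_iff_gcd_eq_one]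
    exact_mod_cast hcop
  obtain ⟨c, d, hcd⟩ := hicop
  set a : ℤ := c * m - d * n with ha
  have h1 : (m : ℤ) ∣ a + 1 := by
    have : a + 1 = 2 * c * m := by rw [ha, ← hcd]; ring
    exact ⟨2 * c, by linarith [this]⟩
  have h2 : (n : ℤ) ∣ a - 1 := by
    have : a - 1 = -(2 * d * n) := by rw [ha, ← hcd]; ring
    exact ⟨-(2 * d), by linarith [this]⟩
  have hsq : (N : ℤ) ∣ a ^ 2 - 1 := by
    have : a ^ 2 - 1 = (a + 1) * (a - 1) := by ring
    rw [this, ← hmn]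
    push_cast
    exact mul_dvd_mul h1 h2
  set x : ZMod N := (a : ZMod N) with hx
  have hx2 : x ^ 2 = 1 := by
    have : ((a ^ 2 - 1 : ℤ) : ZMod N) = 0 := by
      rwa [ZMod.intCast_zmod_eq_zero_iff_dvd]
    push_cast at this
    rw [hx]; linear_combination this
  refine ⟨⟨x, x, by rw [← sq, hx2], by rw [← sq, hx2]⟩, ?_, ?_, ?_⟩
  · ext; simpa using hx2
  · have hk : N.factorization q ≠ 0 :=
      (Nat.Prime.factorization_pos_of_dvd hq hN.ne' hdvd).ne'
    have hqm : (q : ℤ) ∣ (m : ℤ) := by exact_mod_cast dvd_pow_self q hk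
    have : (q : ℤ) ∣ a + 1 := hqm.trans h1
    have h0 : ((a + 1 : ℤ) : ZMod q) = 0 := by rwa [ZMod.intCast_zmod_eq_zero_iff_dvd]
    show (ZMod.castHom hdvd (ZMod q)) x = -1
    rw [hx, map_intCast]
    push_cast at h0
    linear_combination h0
  · intro r hr hrq hrN
    have hrn : (r : ℤ) ∣ (n : ℤ) := by
      have hrm : Nat.Coprime r m := Nat.Coprime.pow_right _
        ((Nat.coprime_primes hr hq).mpr hrq)
      have : r ∣ m * n := by rw [hmn]; exact hrN
      exact_mod_cast (Nat.Coprime.dvd_of_dvd_mul_left hrm this)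
    have : (r : ℤ) ∣ a - 1 := hrn.trans h2
    have h0 : ((a - 1 : ℤ) : ZMod r) = 0 := by rwa [ZMod.intCast_zmod_eq_zero_iff_dvd]
    show (ZMod.castHom hrN (ZMod r)) x = 1
    rw [hx, map_intCast]
    push_cast at h0
    linear_combination h0

lemma bool_of_ite_eq {R : Type*} {a b : R} (hab : a ≠ b) {x y : Bool}
    (h : (if x then a else b) = (if y then a else b)) : x = y := by
  cases x <;> cases y <;> simp_all

/-- If `p` is a prime coprime to `N > 0` such that `⟨p⟩ ≤ (ℤ/Nℤ)*` has index `2` and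
`-1 ∉ ⟨p⟩`, then `N` has at most two odd prime divisors. -/
theorem index_two_at_most_two_odd_prime_divisors
    (N : ℕ) (hN : 0 < N) (p : ℕ) (hp : p.Prime) (hcop : Nat.Coprime p N)
    (hidx : (Subgroup.zpowers (ZMod.unitOfCoprime p hcop)).index = 2)
    (hneg : (-1 : (ZMod N)ˣ) ∉ Subgroup.zpowers (ZMod.unitOfCoprime p hcop)) :
    (N.primeFactors.filter (fun r => Odd r)).card ≤ 2 := by
  classical
  haveI : NeZero N := ⟨hN.ne'⟩
  by_contra hge
  push_neg at hge
  obtain ⟨s, hs_sub, hs_card⟩ := Finset.exists_subset_card_eq hge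
  rw [Finset.card_eq_three] at hs_card
  obtain ⟨q1, q2, q3, h12, h13, h23, rfl⟩ := hs_card
  have hmem : ∀ q ∈ ({q1, q2, q3} : Finset ℕ), q.Prime ∧ Odd q ∧ q ∣ N := by
    intro q hq
    have := hs_sub hq
    simp only [Finset.mem_filter, Nat.mem_primeFactors] at this
    exact ⟨this.1.1, this.2, this.1.2.1⟩
  have hq1 := hmem q1 (by simp); have hq2 := hmem q2 (by simp); have hq3 := hmem q3 (by simp)
  have hfact : ∀ q : ℕ, q.Prime → Odd q → Fact (2 < q) := by
    intro q hq hodd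
    refine ⟨lt_of_le_of_ne hq.two_le ?_⟩
    rintro rfl; exact (Nat.not_odd_iff_even.mpr even_two) hodd
  haveI F1 : Fact (2 < q1) := hfact q1 hq1.1 hq1.2.1
  haveI F2 : Fact (2 < q2) := hfact q2 hq2.1 hq2.2.1
  haveI F3 : Fact (2 < q3) := hfact q3 hq3.1 hq3.2.1
  obtain ⟨u1, hu1sq, hu1self, hu1other⟩ := exists_special_unit' N hN q1 hq1.1 hq1.2.2
  obtain ⟨u2, hu2sq, hu2self, hu2other⟩ := exists_special_unit' N hN q2 hq2.1 hq2.2.2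
  obtain ⟨u3, hu3sq, hu3self, hu3other⟩ := exists_special_unit' N hN q3 hq3.1 hq3.2.2
  set K : Subgroup (ZMod N)ˣ := (powMonoidHom 2 : (ZMod N)ˣ →* (ZMod N)ˣ).ker with hK
  -- the eight elements
  have hfK : ∀ b : Bool × Bool × Bool,
      ((if b.1 then u1 else 1) * (if b.2.1 then u2 else 1) * (if b.2.2 then u3 else 1)) ∈ K := by
    rintro ⟨b1, b2, b3⟩
    simp only [hK, MonoidHom.mem_ker, powMonoidHom_apply]
    cases b1 <;> cases b2 <;> cases b3 <;>
      simp only [if_true, if_false, Bool.false_eq_true, ite_true, ite_false, one_mul, mul_one,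
        mul_pow, one_pow, hu1sq, hu2sq, hu3sq]
  have E1 : ∀ b : Bool × Bool × Bool,
      (ZMod.castHom hq1.2.2 (ZMod q1))
        (((if b.1 then u1 else 1) * (if b.2.1 then u2 else 1) * (if b.2.2 then u3 else 1) :
          (ZMod N)ˣ) : ZMod N) = (if b.1 then -1 else 1) := by
    rintro ⟨b1, b2, b3⟩
    have o2 := hu2other q1 hq1.1 h12 hq1.2.2
    have o3 := hu3other q1 hq1.1 h13 hq1.2.2
    cases b1 <;> cases b2 <;> cases b3 <;>
      simp only [if_true, if_false, Bool.false_eq_true, ite_true, ite_false, one_mul, mul_one,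
        Units.val_mul, Units.val_one, map_mul, map_one, hu1self, o2, o3]
  have E2 : ∀ b : Bool × Bool × Bool,
      (ZMod.castHom hq2.2.2 (ZMod q2))
        (((if b.1 then u1 else 1) * (if b.2.1 then u2 else 1) * (if b.2.2 then u3 else 1) :
          (ZMod N)ˣ) : ZMod N) = (if b.2.1 then -1 else 1) := by
    rintro ⟨b1, b2, b3⟩
    have o1 := hu1other q2 hq2.1 (Ne.symm h12) hq2.2.2
    have o3 := hu3other q2 hq2.1 h23 hq2.2.2
    cases b1 <;> cases b2 <;> cases b3 <;>
      simp only [if_true, if_false, Bool.false_eq_true, ite_true, ite_false, one_mul, mul_one,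
        Units.val_mul, Units.val_one, map_mul, map_one, hu2self, o1, o3]
  have E3 : ∀ b : Bool × Bool × Bool,
      (ZMod.castHom hq3.2.2 (ZMod q3))
        (((if b.1 then u1 else 1) * (if b.2.1 then u2 else 1) * (if b.2.2 then u3 else 1) :
          (ZMod N)ˣ) : ZMod N) = (if b.2.2 then -1 else 1) := by
    rintro ⟨b1, b2, b3⟩
    have o1 := hu1other q3 hq3.1 (Ne.symm h13) hq3.2.2
    have o2 := hu2other q3 hq3.1 (Ne.symm h23) hq3.2.2
    cases b1 <;> cases b2 <;> cases b3 <;>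
      simp only [if_true, if_false, Bool.false_eq_true, ite_true, ite_false, one_mul, mul_one,
        Units.val_mul, Units.val_one, map_mul, map_one, hu3self, o1, o2]
  have hinj : Function.Injective (fun b : Bool × Bool × Bool =>
      (⟨(if b.1 then u1 else 1) * (if b.2.1 then u2 else 1) * (if b.2.2 then u3 else 1),
        hfK b⟩ : K)) := by
    intro b b' hbb
    have hv : (((if b.1 then u1 else 1) * (if b.2.1 then u2 else 1) * (if b.2.2 then u3 else 1) :
          (ZMod N)ˣ) : ZMod N)
        = (((if b'.1 then u1 else 1) * (if b'.2.1 then u2 else 1) * (if b'.2.2 then u3 else 1) :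
          (ZMod N)ˣ) : ZMod N) := by
      have := congrArg (fun x : K => ((x : (ZMod N)ˣ) : ZMod N)) hbb
      simpa using this
    have e1 : (if b.1 then (-1 : ZMod q1) else 1) = (if b'.1 then -1 else 1) := by
      rw [← E1 b, ← E1 b', hv]
    have e2 : (if b.2.1 then (-1 : ZMod q2) else 1) = (if b'.2.1 then -1 else 1) := by
      rw [← E2 b, ← E2 b', hv]
    have e3 : (if b.2.2 then (-1 : ZMod q3) else 1) = (if b'.2.2 then -1 else 1) := by
      rw [← E3 b, ← E3 b', hv]
    have n1 : (-1 : ZMod q1) ≠ 1 := ZMod.neg_one_ne_one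
    have n2 : (-1 : ZMod q2) ≠ 1 := ZMod.neg_one_ne_one
    have n3 : (-1 : ZMod q3) ≠ 1 := ZMod.neg_one_ne_one
    obtain ⟨b1, b2, b3⟩ := b; obtain ⟨b1', b2', b3'⟩ := b'
    simp only at e1 e2 e3
    rw [Prod.mk.injEq, Prod.mk.injEq]
    exact ⟨bool_of_ite_eq n1 e1, bool_of_ite_eq n2 e2, bool_of_ite_eq n3 e3⟩
  -- lower bound: 8 ≤ Nat.card K
  have hlow : 8 ≤ Nat.card K := by
    calc (8 : ℕ) = Nat.card (Bool × Bool × Bool) := by simp [Nat.card_eq_fintype_card]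
    _ ≤ Nat.card K := Nat.card_le_card_of_injective _ hinj
  -- upper bound
  set H : Subgroup (ZMod N)ˣ := Subgroup.zpowers (ZMod.unitOfCoprime p hcop) with hH
  haveI : IsCyclic H := by
    refine ⟨⟨⟨ZMod.unitOfCoprime p hcop, Subgroup.mem_zpowers _⟩, ?_⟩⟩
    rintro ⟨x, hx⟩
    obtain ⟨k, hk⟩ := hx
    exact ⟨k, Subtype.ext (by simpa using hk)⟩
  set φ : K →* (ZMod N)ˣ ⧸ H := (QuotientGroup.mk' H).comp K.subtype with hφ
  have hker : Nat.card φ.ker ≤ 2 := by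
    have hker_sub : ∀ x : φ.ker, ((x : K) : (ZMod N)ˣ) ∈ H := by
      rintro ⟨x, hx⟩
      have h1 : φ x = 1 := hx
      rw [hφ, MonoidHom.comp_apply] at h1
      have := (QuotientGroup.eq_one_iff _).mp h1
      simpa using this
    have hsq : ∀ x : φ.ker, ((x : K) : (ZMod N)ˣ) ^ 2 = 1 := fun x => (x : K).2
    have step1 : Nat.card φ.ker ≤ Nat.card {h : H // h ^ 2 = 1} := by
      refine Nat.card_le_card_of_injective
        (fun x => ⟨⟨((x : K) : (ZMod N)ˣ), hker_sub x⟩, ?_⟩) ?_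
      · refine Subtype.ext ?_
        rw [SubmonoidClass.coe_pow]
        exact hsq x
      · intro x y h
        have h2 : ((x : K) : (ZMod N)ˣ) = ((y : K) : (ZMod N)ˣ) :=
          congrArg (fun z : {h : H // h ^ 2 = 1} => ((z.1 : H) : (ZMod N)ˣ)) h
        exact Subtype.ext (Subtype.ext h2)
    have step2 : Nat.card {h : H // h ^ 2 = 1} ≤ 2 := by
      rw [Nat.card_eq_fintype_card, Fintype.card_subtype]
      exact IsCyclic.card_pow_eq_one_le two_pos
    exact step1.trans step2
  have hrange : φ.ker.index ≤ 2 := by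
    rw [Subgroup.index_ker]
    calc Nat.card φ.range ≤ Nat.card ((ZMod N)ˣ ⧸ H) := Subgroup.card_le_card_group _
      _ = H.index := rfl
      _ = 2 := hidx
  have hcardK : Nat.card K = Nat.card φ.ker * φ.ker.index :=
    (Subgroup.card_mul_index φ.ker).symm
  have : (8 : ℕ) ≤ 4 := by
    calc (8 : ℕ) ≤ Nat.card K := hlow
      _ = Nat.card φ.ker * φ.ker.index := hcardK
      _ ≤ 2 * 2 := Nat.mul_le_mul hker hrange
      _ = 4 := rfl
  omega
end
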